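/- arXiv:2510.24132 — 6 statements merged into one kernel-verified Lean document; each statement's English description precedes it below -/
import Mathlib

section
/- Every GDD(2, k, n+r) of type 1^n r^1 with r > 1, viewed as a code over Z_2^n × Z_{r+1}, has minimum Hamming distance at least 2(k−2)+1; hence it is a mixed Steiner system MS(2, k, Z_2^n × Z_{r+1}). -/
open Finset

private lemma zmod2_cases (a : ZMod 2) : a = 0 ∨ a = 1 := by revert a; decide

private lemma key_identity {n : ℕ} (x y : Fin n → ZMod 2) :
    hammingDist x y + 2 * #{i | x i = 1 ∧ y i = 1} = hammingNorm x + hammingNorm y := by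
  simp only [hammingDist, hammingNorm, Finset.card_filter, ← Finset.sum_add_distrib,
    Finset.mul_sum]
  apply Finset.sum_congr rfl
  intro i _
  rcases zmod2_cases (x i) with hx | hx <;> rcases zmod2_cases (y i) with hy | hy <;>
    simp [hx, hy]

private lemma norm_pair {n : ℕ} {i j : Fin n} (hij : i ≠ j) :
    hammingNorm (fun t => if t = i ∨ t = j then (1 : ZMod 2) else 0) = 2 := by
  rw [hammingNorm]
  have h : ({t | (if t = i ∨ t = j then (1 : ZMod 2) else 0) ≠ 0} : Finset (Fin n))
      = {i, j} := by
    ext t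
    by_cases h : t = i ∨ t = j <;> simp [h] <;> tauto
  rw [h, card_insert_of_notMem (by simpa using hij), card_singleton]

private lemma norm_single {n : ℕ} (i : Fin n) :
    hammingNorm (fun t => if t = i then (1 : ZMod 2) else 0) = 1 := by
  rw [hammingNorm]
  have h : ({t | (if t = i then (1 : ZMod 2) else 0) ≠ 0} : Finset (Fin n)) = {i} := by
    ext t
    by_cases h : t = i <;> simp [h]
  rw [h, card_singleton]

private lemma dist_pair {n : ℕ} (c : Fin n → ZMod 2) {i j : Fin n} (hij : i ≠ j)
    (hi : c i = 1) (hj : c j = 1) :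
    hammingDist (fun t => if t = i ∨ t = j then (1 : ZMod 2) else 0) c + 2
      = hammingNorm c := by
  have h := key_identity (fun t => if t = i ∨ t = j then (1 : ZMod 2) else 0) c
  have h1 : ({t | (if t = i ∨ t = j then (1 : ZMod 2) else 0) = 1 ∧ c t = 1} :
      Finset (Fin n)) = {i, j} := by
    ext t
    constructor
    · intro ht
      simp only [mem_filter, mem_univ, true_and] at ht
      by_contra hc
      simp only [mem_insert, mem_singleton, not_or] at hc
      rw [if_neg (by tauto)] at ht
      exact absurd ht.1 (by decide)
    · intro ht
      simp only [mem_insert, mem_singleton] at ht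
      rcases ht with rfl | rfl <;> simp [hi, hj]
  rw [h1, norm_pair hij] at h
  rw [card_insert_of_notMem (by simpa using hij), card_singleton] at h
  omega

private lemma dist_single {n : ℕ} (c : Fin n → ZMod 2) (i : Fin n) (hi : c i = 1) :
    hammingDist (fun t => if t = i then (1 : ZMod 2) else 0) c + 1 = hammingNorm c := by
  have h := key_identity (fun t => if t = i then (1 : ZMod 2) else 0) c
  have h1 : ({t | (if t = i then (1 : ZMod 2) else 0) = 1 ∧ c t = 1} :
      Finset (Fin n)) = {i} := by
    ext t
    constructor
    · intro ht
      simp only [mem_filter, mem_univ, true_and] at ht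
      by_contra hc
      simp only [mem_singleton] at hc
      rw [if_neg hc] at ht
      exact absurd ht.1 (by decide)
    · intro ht
      simp only [mem_singleton] at ht
      subst ht; simp [hi]
  rw [h1, norm_single, card_singleton] at h
  omega

/-- A `GDD(2, k, n+r)` of type `1^n r^1` with `r > 1`, viewed as a code over
`Z₂ⁿ × Z_{r+1}` (binary coordinates for the singleton groups, one `Z_{r+1}` coordinate
for the group of size `r`; a block has constant weight `k` and every weight-2 word is
covered by exactly one codeword), has minimum Hamming distance at least `2(k-2)+1`,
i.e. it is a mixed Steiner system `MS(2, k, Z₂ⁿ × Z_{r+1})`. -/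
theorem stmt4 (n r k : ℕ) (hk : 2 ≤ k) (hr : 1 < r)
    (C : Finset ((Fin n → ZMod 2) × ZMod (r + 1)))
    (hw : ∀ c ∈ C, hammingNorm c.1 + (if c.2 = 0 then 0 else 1) = k)
    (hcov : ∀ x : (Fin n → ZMod 2) × ZMod (r + 1),
      hammingNorm x.1 + (if x.2 = 0 then 0 else 1) = 2 →
      ∃! c, c ∈ C ∧ hammingDist x.1 c.1 + (if x.2 = c.2 then 0 else 1) = k - 2) :
    ∀ c₁ ∈ C, ∀ c₂ ∈ C, c₁ ≠ c₂ →
      2 * (k - 2) + 1 ≤ hammingDist c₁.1 c₂.1 + (if c₁.2 = c₂.2 then 0 else 1) := by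
  intro c₁ h₁ c₂ h₂ hne
  by_contra hlt
  push_neg at hlt
  have key := key_identity c₁.1 c₂.1
  have hw₁ := hw c₁ h₁
  have hw₂ := hw c₂ h₂
  -- Case A machinery: two common binary coordinates give a contradiction
  have caseA : ∀ i j : Fin n, i ≠ j → c₁.1 i = 1 → c₂.1 i = 1 → c₁.1 j = 1 →
      c₂.1 j = 1 → False := by
    intro i j hij hi₁ hi₂ hj₁ hj₂
    obtain ⟨c, -, hu⟩ := hcov (fun t => if t = i ∨ t = j then (1 : ZMod 2) else 0, 0)
      (by simp [norm_pair hij])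
    have hsat : ∀ d, d ∈ C → d.1 i = 1 → d.1 j = 1 →
        (d ∈ C ∧ hammingDist (fun t => if t = i ∨ t = j then (1 : ZMod 2) else 0) d.1
          + (if ((fun t => if t = i ∨ t = j then (1 : ZMod 2) else 0,
              (0 : ZMod (r+1))).2 = d.2) then 0 else 1) = k - 2) := by
      intro d hd hdi hdj
      refine ⟨hd, ?_⟩
      have h1 := dist_pair d.1 hij hdi hdj
      have h2 := hw d hd
      by_cases h0 : d.2 = 0
      · rw [if_pos h0.symm]
        rw [if_pos h0] at h2
        omega
      · rw [if_neg (fun h => h0 h.symm)]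
        rw [if_neg h0] at h2
        omega
    exact hne ((hu c₁ (hsat c₁ h₁ hi₁ hj₁)).trans (hu c₂ (hsat c₂ h₂ hi₂ hj₂)).symm)
  by_cases heq : c₁.2 = c₂.2
  · rw [if_pos heq] at hlt
    by_cases h0 : c₁.2 = 0
    · -- both extra coordinates zero; binary intersection ≥ 2
      rw [if_pos h0] at hw₁
      rw [if_pos (heq ▸ h0)] at hw₂
      have hcard : 1 < #{t | c₁.1 t = 1 ∧ c₂.1 t = 1} := by omega
      obtain ⟨i, hiI, j, hjI, hij⟩ := Finset.one_lt_card.mp hcard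
      simp only [mem_filter, mem_univ, true_and] at hiI hjI
      exact caseA i j hij hiI.1 hiI.2 hjI.1 hjI.2
    · -- extra coordinates equal and nonzero; binary intersection ≥ 1
      rw [if_neg h0] at hw₁
      rw [if_neg (heq ▸ h0)] at hw₂
      have hcard : 0 < #{t | c₁.1 t = 1 ∧ c₂.1 t = 1} := by omega
      obtain ⟨i, hiI⟩ := Finset.card_pos.mp hcard
      simp only [mem_filter, mem_univ, true_and] at hiI
      obtain ⟨hi₁, hi₂⟩ := hiI
      obtain ⟨c, -, hu⟩ := hcov (fun t => if t = i then (1 : ZMod 2) else 0, c₁.2)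
        (by simp [norm_single, h0])
      have hsat : ∀ d, d ∈ C → d.1 i = 1 → d.2 = c₁.2 →
          (d ∈ C ∧ hammingDist (fun t => if t = i then (1 : ZMod 2) else 0) d.1
            + (if ((fun t => if t = i then (1 : ZMod 2) else 0, c₁.2).2 = d.2)
                then 0 else 1) = k - 2) := by
        intro d hd hdi hd2
        refine ⟨hd, ?_⟩
        have h1 := dist_single d.1 i hdi
        have h2 := hw d hd
        rw [if_neg (hd2 ▸ h0)] at h2
        rw [if_pos hd2.symm]
        omega
      exact hne ((hu c₁ (hsat c₁ h₁ hi₁ rfl)).trans (hu c₂ (hsat c₂ h₂ hi₂ heq.symm)).symm)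
  · rw [if_neg heq] at hlt
    have e₁ : (if c₁.2 = 0 then 0 else 1) ≤ 1 := by split <;> omega
    have e₂ : (if c₂.2 = 0 then 0 else 1) ≤ 1 := by split <;> omega
    have hcard : 1 < #{t | c₁.1 t = 1 ∧ c₂.1 t = 1} := by omega
    obtain ⟨i, hiI, j, hjI, hij⟩ := Finset.one_lt_card.mp hcard
    simp only [mem_filter, mem_univ, true_and] at hiI hjI
    exact caseA i j hij hiI.1 hiI.2 hjI.1 hjI.2
end

section
/- More generally, for any t ≥ 2 and k ≥ t, every GDD(t, k, n+r) of type 1^n r^1 with r > 1, viewed as a code over Z_2^n × Z_{r+1}, has minimum Hamming distance at least 2(k−t)+1, so it is a mixed Steiner system MS(t, k, Z_2^n × Z_{r+1}). -/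
open Finset

private lemma meet_identity {n : ℕ} (a b : Fin n → ZMod 2) :
    hammingNorm a + hammingNorm b
      = hammingDist a b + 2 * hammingNorm (fun i => if a i = b i then a i else 0) := by
  classical
  simp only [hammingNorm, hammingDist, Finset.card_filter, Finset.mul_sum,
    ← Finset.sum_add_distrib]
  refine Finset.sum_congr rfl fun i _ => ?_
  have : ∀ u v : ZMod 2,
      ((if u ≠ 0 then 1 else 0) + (if v ≠ 0 then 1 else 0) : ℕ)
        = (if u ≠ v then 1 else 0) + 2 * (if (if u = v then u else 0) ≠ 0 then 1 else 0) := by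
    decide
  exact this (a i) (b i)

private lemma dist_of_sub {n : ℕ} (x c : Fin n → ZMod 2)
    (h : ∀ i, x i ≠ 0 → x i = c i) :
    hammingDist x c + hammingNorm x = hammingNorm c := by
  classical
  simp only [hammingNorm, hammingDist, Finset.card_filter, ← Finset.sum_add_distrib]
  refine Finset.sum_congr rfl fun i _ => ?_
  by_cases hx : x i = 0
  · simp [hx, eq_comm]
  · simp [hx, h i hx]

/-- For `t ≥ 2` and `k ≥ t`, a `GDD(t, k, n+r)` of type `1^n r^1` with `r > 1`, viewed as
a code over `Z₂ⁿ × Z_{r+1}` (blocks have constant weight `k` and every weight-`t` word is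
within Hamming distance `k - t` of exactly one codeword), has minimum Hamming distance at
least `2(k-t)+1`, i.e. it is a mixed Steiner system `MS(t, k, Z₂ⁿ × Z_{r+1})`. -/
theorem stmt5 (n r t k : ℕ) (ht : 2 ≤ t) (htk : t ≤ k) (hr : 1 < r)
    (C : Finset ((Fin n → ZMod 2) × ZMod (r + 1)))
    (hw : ∀ c ∈ C, hammingNorm c.1 + (if c.2 = 0 then 0 else 1) = k)
    (hcov : ∀ x : (Fin n → ZMod 2) × ZMod (r + 1),
      hammingNorm x.1 + (if x.2 = 0 then 0 else 1) = t →
      ∃! c, c ∈ C ∧ hammingDist x.1 c.1 + (if x.2 = c.2 then 0 else 1) = k - t) :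
    ∀ c₁ ∈ C, ∀ c₂ ∈ C, c₁ ≠ c₂ →
      2 * (k - t) + 1 ≤ hammingDist c₁.1 c₂.1 + (if c₁.2 = c₂.2 then 0 else 1) := by
  classical
  intro c₁ hc₁ c₂ hc₂ hne
  by_contra hlt
  push_neg at hlt
  have hw1 := hw c₁ hc₁
  have hw2 := hw c₂ hc₂
  set z1 : Fin n → ZMod 2 := fun i => if c₁.1 i = c₂.1 i then c₁.1 i else 0 with hz1
  set z2 : ZMod (r + 1) := if c₁.2 = c₂.2 then c₁.2 else 0 with hz2
  have hmeet := meet_identity c₁.1 c₂.1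
  rw [← hz1] at hmeet
  set ε : ℕ := if z2 = 0 then 0 else 1 with hε
  -- the meet has weight at least t
  have hzw : t ≤ hammingNorm z1 + ε := by
    have hb1 : (if c₁.2 = 0 then (0:ℕ) else 1) ≤ 1 := by split <;> omega
    have hb2 : (if c₂.2 = 0 then (0:ℕ) else 1) ≤ 1 := by split <;> omega
    by_cases h12 : c₁.2 = c₂.2
    · rw [if_pos h12] at hlt
      by_cases h10 : c₁.2 = 0
      · have hε0 : ε = 0 := by rw [hε, hz2, if_pos h12, h10]; simp
        rw [if_pos h10] at hw1
        rw [if_pos (h12.symm.trans h10)] at hw2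
        omega
      · have hε1 : ε = 1 := by rw [hε, hz2, if_pos h12, if_neg h10]
        rw [if_neg h10] at hw1
        rw [if_neg (fun h => h10 (h12.trans h))] at hw2
        omega
    · rw [if_neg h12] at hlt
      have hε0 : ε = 0 := by rw [hε, hz2, if_neg h12]; simp
      omega
  have hεt : ε ≤ 1 := by rw [hε]; split <;> omega
  -- choose a sub-word of the meet of weight t
  obtain ⟨S, hS, hScard⟩ :=
    Finset.exists_subset_card_eq (s := ({i | z1 i ≠ 0} : Finset (Fin n))) (n := t - ε)
      (by
        have hcard : (({i | z1 i ≠ 0} : Finset (Fin n))).card = hammingNorm z1 := rfl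
        omega)
  set x1 : Fin n → ZMod 2 := fun i => if i ∈ S then z1 i else 0 with hx1
  have hx1norm : hammingNorm x1 = t - ε := by
    rw [← hScard, hammingNorm]
    congr 1
    ext i
    simp only [Finset.mem_filter, Finset.mem_univ, true_and, hx1]
    constructor
    · intro h
      by_contra hi
      simp [hi] at h
    · intro hi
      have := hS hi
      simp only [Finset.mem_filter, Finset.mem_univ, true_and] at this
      simpa [hi] using this
  -- x1 is a sub-word of both codewords
  have hsub : ∀ j : Fin n → ZMod 2, (∀ i, z1 i ≠ 0 → z1 i = j i) →
      ∀ i, x1 i ≠ 0 → x1 i = j i := by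
    intro j hj i hi
    by_cases hiS : i ∈ S
    · have : x1 i = z1 i := by simp [hx1, hiS]
      rw [this] at hi ⊢
      exact hj i hi
    · simp [hx1, hiS] at hi
  have hz1c1 : ∀ i, z1 i ≠ 0 → z1 i = c₁.1 i := by
    intro i hi
    by_cases h : c₁.1 i = c₂.1 i
    · simp [hz1, h]
    · simp [hz1, h] at hi
  have hz1c2 : ∀ i, z1 i ≠ 0 → z1 i = c₂.1 i := by
    intro i hi
    by_cases h : c₁.1 i = c₂.1 i
    · simp [hz1, h]
    · simp [hz1, h] at hi
  have hd1 := dist_of_sub x1 c₁.1 (hsub _ hz1c1)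
  have hd2 := dist_of_sub x1 c₂.1 (hsub _ hz1c2)
  -- the last coordinate of the sub-word
  have hlast : ∀ w : ZMod (r + 1), (w = c₁.2 ∨ w = c₂.2) →
      (if z2 = w then (0:ℕ) else 1) + ε = (if w = 0 then 0 else 1) := by
    intro w hw'
    by_cases hz20 : z2 = 0
    · simp only [hz20, if_pos rfl] at hε
      rw [hε, hz20]
      by_cases hw0 : w = 0 <;> simp [hw0, eq_comm]
    · have h12 : c₁.2 = c₂.2 := by
        by_contra h
        rw [hz2, if_neg h] at hz20
        exact hz20 rfl
      have hz2c1 : z2 = c₁.2 := by rw [hz2, if_pos h12]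
      have hzw' : z2 = w := by
        rcases hw' with h | h
        · rw [h]; exact hz2c1
        · rw [h, ← h12]; exact hz2c1
      have hw0 : w ≠ 0 := fun h => hz20 (hzw'.trans h)
      simp only [if_pos hzw', if_neg hw0, hε, if_neg hz20]
  -- apply the covering property to x = (x1, z2)
  have hxw : hammingNorm (x1, z2).1 + (if (x1, z2).2 = 0 then (0:ℕ) else 1) = t := by
    simp only [hx1norm, ← hε]
    omega
  obtain ⟨c, _, hu⟩ := hcov (x1, z2) hxw
  have key : ∀ cc : (Fin n → ZMod 2) × ZMod (r + 1), cc ∈ C →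
      (hammingDist x1 cc.1 + hammingNorm x1 = hammingNorm cc.1) →
      (cc.2 = c₁.2 ∨ cc.2 = c₂.2) →
      hammingDist (x1, z2).1 cc.1 + (if (x1, z2).2 = cc.2 then (0:ℕ) else 1) = k - t := by
    intro cc hcc hd hor
    have hwcc := hw cc hcc
    have hl := hlast cc.2 hor
    set e := if cc.2 = (0 : ZMod (r+1)) then (0:ℕ) else 1
    simp only
    omega
  have h1 := hu c₁ ⟨hc₁, key c₁ hc₁ hd1 (Or.inl rfl)⟩
  have h2 := hu c₂ ⟨hc₂, key c₂ hc₂ hd2 (Or.inr rfl)⟩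
  exact hne (h1.trans h2.symm)
end

section
/- If there exists a mixed Steiner system MS(1, k, Q × Z_q) where Q = Z_{q_1} × ⋯ × Z_{q_{n−1}}, then the quantity Σ_{i=1}^{n−1}(q_i − 1) − (q − 1)(k − 1) is nonnegative and divisible by k. -/
/-!
Covering a weight-one word `αeᵢ` within distance `k - 1` by a weight-`k` word `c` just means
`cᵢ = α`, so the codewords partition the nonzero points `(i, α)` into blocks of size `k`. Counting
points gives `|C| k = Σᵢ (qᵢ - 1)`, and the `q - 1` nonzero points of the last coordinate lie in
distinct blocks, so `|C| ≥ q - 1`. Hence `Σ_{i<n} (qᵢ - 1) - (q - 1)(k - 1) = (|C| - (q - 1)) k`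
is a nonnegative multiple of `k`.
-/

open Finset

section Hamming

variable {ι : Type*} [Fintype ι] {β : ι → Type*} [∀ i, DecidableEq (β i)]

theorem hammingDist_eq_card_erase_add [DecidableEq ι] (x y : ∀ i, β i) (i : ι) :
    hammingDist x y = #{j ∈ univ.erase i | x j ≠ y j} + if x i = y i then 0 else 1 := by
  rw [hammingDist, card_filter, card_filter, ← add_sum_erase _ _ (mem_univ i), add_comm]
  simp only [ne_eq, ite_not]

variable [∀ i, Zero (β i)]

theorem hammingNorm_eq_card_erase_add [DecidableEq ι] (x : ∀ i, β i) (i : ι) :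
    hammingNorm x = #{j ∈ univ.erase i | x j ≠ 0} + if x i = 0 then 0 else 1 := by
  simpa using hammingDist_eq_card_erase_add x 0 i

theorem hammingNorm_single [DecidableEq ι] {i : ι} {α : β i} (hα : α ≠ 0) :
    hammingNorm (Pi.single i α) = 1 := by
  rw [hammingNorm_eq_card_erase_add _ i, Pi.single_eq_same, if_neg hα, add_eq_right,
    card_eq_zero, filter_eq_empty_iff]
  intro j hj
  simp [Pi.single_eq_of_ne (ne_of_mem_erase hj)]

theorem hammingDist_single_eq_hammingNorm_sub_one_iff [DecidableEq ι] {i : ι} {α : β i}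
    (hα : α ≠ 0) (c : ∀ i, β i) : hammingDist (Pi.single i α) c = hammingNorm c - 1 ↔ c i = α := by
  have hsame : #{j ∈ univ.erase i | Pi.single i α j ≠ c j} = #{j ∈ univ.erase i | c j ≠ 0} := by
    congr 1
    refine filter_congr fun j hj => ?_
    rw [Pi.single_eq_of_ne (ne_of_mem_erase hj), ne_comm]
  rw [hammingNorm_eq_card_erase_add _ i, hammingDist_eq_card_erase_add _ _ i, hsame,
    Pi.single_eq_same]
  by_cases hc : c i = α
  · simp [hc, hα]
  · simp only [eq_comm (a := α), hc, if_false, iff_false]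
    split_ifs <;> omega

theorem sum_hammingNorm_eq_sum_card_filter (C : Finset (∀ i, β i)) :
    ∑ c ∈ C, hammingNorm c = ∑ i, #{c ∈ C | c i ≠ 0} := by
  simp only [hammingNorm, card_filter]
  exact sum_comm

end Hamming

section UniquelyCoversPoints

variable {ι : Type*} {β : ι → Type*} [∀ i, Zero (β i)]

def UniquelyCoversPoints (C : Finset (∀ i, β i)) : Prop :=
  ∀ i (α : β i), α ≠ 0 → ∃! c, c ∈ C ∧ c i = α

theorem uniquelyCoversPoints_of_existsUnique_hammingDist [Fintype ι] [DecidableEq ι]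
    [∀ i, DecidableEq (β i)] {C : Finset (∀ i, β i)} {k : ℕ} (hCw : ∀ c ∈ C, hammingNorm c = k)
    (hcov : ∀ x : ∀ i, β i, hammingNorm x = 1 → ∃! c, c ∈ C ∧ hammingDist x c = k - 1) :
    UniquelyCoversPoints C := by
  intro i α hα
  refine (existsUnique_congr fun c => and_congr_right fun hc => ?_).mp
    (hcov _ (hammingNorm_single hα))
  rw [← hCw c hc, hammingDist_single_eq_hammingNorm_sub_one_iff hα]

namespace UniquelyCoversPoints

variable [∀ i, DecidableEq (β i)] {C : Finset (∀ i, β i)}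

theorem card_filter_apply_ne_zero (hC : UniquelyCoversPoints C) (i : ι) [Fintype (β i)] :
    #{c ∈ C | c i ≠ 0} = Fintype.card (β i) - 1 := by
  rw [← card_univ, ← card_erase_of_mem (mem_univ 0), ← filter_ne' univ (0 : β i)]
  refine card_bij (fun c _ => c i) (fun c hc => by simpa using (mem_filter.mp hc).2) ?_ ?_
  · intro c hc c' hc' hcc'
    simp only [mem_filter] at hc hc'
    exact (hC i (c i) hc.2).unique ⟨hc.1, rfl⟩ ⟨hc'.1, hcc'.symm⟩
  · intro α hα
    obtain ⟨c, ⟨hcC, hci⟩, -⟩ := hC i α (mem_filter.mp hα).2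
    exact ⟨c, mem_filter.mpr ⟨hcC, hci ▸ (mem_filter.mp hα).2⟩, hci⟩

theorem card_sub_one_le_card (hC : UniquelyCoversPoints C) (i : ι) [Fintype (β i)] :
    Fintype.card (β i) - 1 ≤ #C :=
  hC.card_filter_apply_ne_zero i ▸ card_filter_le C _

theorem card_mul_eq_sum [Fintype ι] [∀ i, Fintype (β i)] (hC : UniquelyCoversPoints C) {k : ℕ}
    (hCw : ∀ c ∈ C, hammingNorm c = k) : #C * k = ∑ i, (Fintype.card (β i) - 1) := by
  rw [← smul_eq_mul, ← sum_const, ← sum_congr rfl hCw, sum_hammingNorm_eq_sum_card_filter]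
  exact sum_congr rfl fun i _ => hC.card_filter_apply_ne_zero i

end UniquelyCoversPoints

end UniquelyCoversPoints

theorem mul_sub_one_le_and_dvd_sub_of_add_eq_mul {t r N k : ℕ} (htot : t + r = N * k)
    (hr : r ≤ N) : r * (k - 1) ≤ t ∧ k ∣ t - r * (k - 1) := by
  rcases k with _ | m
  · simp_all
  have hrm : r * m ≤ t := by nlinarith
  refine ⟨by simpa using hrm, N - r, ?_⟩
  simp only [add_tsub_cancel_right]
  have htotℤ : (t + r : ℤ) = N * (m + 1) := by exact_mod_cast htot
  zify [hrm, hr]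
  linear_combination htotℤ

theorem stmt6_general (n k : ℕ) (q : Fin (n + 1) → ℕ) (hq : ∀ i, 2 ≤ q i)
    (h : ∃ C : Finset (∀ i, ZMod (q i)),
      (∀ c ∈ C, hammingNorm c = k) ∧
      ∀ x : ∀ i, ZMod (q i), hammingNorm x = 1 →
        ∃! c, c ∈ C ∧ hammingDist x c = k - 1) :
    (q (Fin.last n) - 1) * (k - 1) ≤ ∑ i : Fin n, (q i.castSucc - 1) ∧
    k ∣ (∑ i : Fin n, (q i.castSucc - 1)) - (q (Fin.last n) - 1) * (k - 1) := by
  obtain ⟨C, hCw, hcov⟩ := h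
  have : ∀ i, NeZero (q i) := fun i => ⟨by have := hq i; omega⟩
  have hC := uniquelyCoversPoints_of_existsUnique_hammingDist hCw hcov
  have htotal := hC.card_mul_eq_sum hCw
  have hlast := hC.card_sub_one_le_card (Fin.last n)
  simp only [ZMod.card, Fin.sum_univ_castSucc] at htotal hlast
  exact mul_sub_one_le_and_dvd_sub_of_add_eq_mul htotal.symm hlast

/-- If there exists a mixed Steiner system `MS(1, k, Z_{q₁} × ⋯ × Z_{q_n} × Z_q)`
(a set of weight-`k` words over the mixed alphabet in which every weight-1 word is
within Hamming distance `k - 1` of exactly one codeword), then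
`Σ_{i<n} (qᵢ - 1) - (q - 1)(k - 1)` is nonnegative and divisible by `k`.
Here the alphabet sizes are `q : Fin (n+1) → ℕ`, with the last coordinate playing
the role of `Z_q`. -/
theorem stmt6 (n k : ℕ) (hk : 1 ≤ k) (q : Fin (n + 1) → ℕ) (hq : ∀ i, 2 ≤ q i)
    (h : ∃ C : Finset (∀ i, ZMod (q i)),
      (∀ c ∈ C, hammingNorm c = k) ∧
      ∀ x : ∀ i, ZMod (q i), hammingNorm x = 1 →
        ∃! c, c ∈ C ∧ hammingDist x c = k - 1) :
    (q (Fin.last n) - 1) * (k - 1) ≤ ∑ i : Fin n, (q i.castSucc - 1) ∧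
    k ∣ (∑ i : Fin n, (q i.castSucc - 1)) - (q (Fin.last n) - 1) * (k - 1) :=
  stmt6_general n k q hq h
end

section
/- Let Q = Z_{q_1} × ⋯ × Z_{q_n} with q_1 ≤ q_2 ≤ ⋯ ≤ q_n, not all q_i equal. If Σ_{i=1}^{n−1}(q_i − 1) − (q_n − 1)(k − 1) is nonnegative and divisible by k, then there exists a mixed Steiner system MS(1, k, Q). -/
/-!
Order the nonzero points `(i, α)` coordinate by coordinate, so that the `qᵢ - 1` points of
each coordinate occupy consecutive positions, and put the point at position `p` into block
`p mod b`, where `k b = Σᵢ (qᵢ - 1)`. Every residue class of `{0, …, kb - 1}` has exactly `k`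
elements, and since `qᵢ - 1 ≤ b`, no block receives two points of the same coordinate. The
hypotheses are exactly what makes `b = (Σ_{i<n} (qᵢ - 1) - (qₙ - 1)(k - 1)) / k + (qₙ - 1)`
an integer with `qₙ - 1 ≤ b`.
-/

open Finset

section MixedSteiner

variable {ι : Type*} [Fintype ι] {A : ι → Type*} [∀ i, Zero (A i)] [∀ i, DecidableEq (A i)]

def IsMixedSteinerSystem (k : ℕ) (C : Finset (∀ i, A i)) : Prop :=
  (∀ c ∈ C, hammingNorm c = k) ∧
    ∀ x : ∀ i, A i, hammingNorm x = 1 → ∃! c, c ∈ C ∧ hammingDist x c = k - 1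

theorem exists_eq_single_of_hammingNorm_eq_one [DecidableEq ι] {x : ∀ i, A i}
    (hx : hammingNorm x = 1) : ∃ i, x i ≠ 0 ∧ x = Pi.single i (x i) := by
  obtain ⟨i, hi⟩ := card_eq_one.mp hx
  have hsupp : ∀ j, x j ≠ 0 ↔ j = i := fun j => by
    simpa using congrArg (j ∈ ·) hi
  refine ⟨i, (hsupp i).mpr rfl, funext fun j => ?_⟩
  by_cases hji : j = i
  · subst hji; simp
  · simpa [hji] using mt (hsupp j).mp hji

theorem hammingDist_single_eq_sub_one_iff [DecidableEq ι] {k : ℕ} (hk : 1 ≤ k) {i : ι}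
    {α : A i} (hα : α ≠ 0) {y : ∀ i, A i} (hy : hammingNorm y = k) :
    hammingDist (Pi.single i α) y = k - 1 ↔ y i = α := by
  by_cases hyi : y i = α
  · have hdiff : ({j | Pi.single i α j ≠ y j} : Finset ι)
        = ({j | y j ≠ 0} : Finset ι).erase i := by
      ext j
      by_cases hji : j = i
      · subst hji; simp [hyi]
      · simp [hji, eq_comm]
    rw [hammingDist, hdiff, card_erase_of_mem (by simp [hyi, hα]), ← hammingNorm, hy]
    simp [hyi]
  · have hle : hammingNorm y ≤ hammingDist (Pi.single i α) y := by
      refine card_le_card fun j => ?_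
      by_cases hji : j = i
      · subst hji; simp [Ne.symm hyi]
      · simp [hji, eq_comm]
    simp only [hyi, iff_false]
    omega

theorem exists_isMixedSteinerSystem_of_exactCover {β : Type*} [Fintype β] {k : ℕ} (hk : 1 ≤ k)
    (c : β → ∀ i, A i) (hnorm : ∀ r, hammingNorm (c r) = k)
    (hcover : ∀ i (α : A i), α ≠ 0 → ∃! r, c r i = α) :
    ∃ C : Finset (∀ i, A i), IsMixedSteinerSystem k C := by
  classical
  refine ⟨univ.image c, by simpa using hnorm, fun x hx => ?_⟩
  obtain ⟨i, hxi, hx⟩ := exists_eq_single_of_hammingNorm_eq_one hx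
  have hdist : ∀ r, hammingDist x (c r) = k - 1 ↔ c r i = x i := fun r => by
    simpa only [← hx] using hammingDist_single_eq_sub_one_iff hk hxi (hnorm r)
  obtain ⟨r, hr, huniq⟩ := hcover i (x i) hxi
  refine ⟨c r, ⟨mem_image_of_mem c (mem_univ r), (hdist r).mpr hr⟩, ?_⟩
  rintro _ ⟨hy, hyd⟩
  obtain ⟨r', -, rfl⟩ := mem_image.mp hy
  rw [huniq r' ((hdist r').mp hyd)]

/-- A partition of the nonzero points `(i, α)` into blocks of size `k`, indexed by `β`, is
encoded as an equivalence with `Fin k × β` whose second component is the block. -/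
theorem exists_exactCover_of_equiv {β : Type*} {k : ℕ}
    (e : (Σ i, {α : A i // α ≠ 0}) ≃ Fin k × β)
    (he : ∀ p p', p.1 = p'.1 → (e p).2 = (e p').2 → p = p') :
    ∃ c : β → ∀ i, A i, (∀ r, hammingNorm (c r) = k) ∧
      ∀ i (α : A i), α ≠ 0 → ∃! r, c r i = α := by
  classical
  let c : β → ∀ i, A i := fun r i =>
    if h : ∃ a : {α : A i // α ≠ 0}, (e ⟨i, a⟩).2 = r then h.choose else 0
  have hc : ∀ r i (a : {α : A i // α ≠ 0}), c r i = a ↔ (e ⟨i, a⟩).2 = r := by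
    intro r i a
    by_cases h : ∃ a : {α : A i // α ≠ 0}, (e ⟨i, a⟩).2 = r
    · simp only [c, dif_pos h]
      refine ⟨fun ha => Subtype.ext ha ▸ h.choose_spec, fun ha => ?_⟩
      have := he ⟨i, h.choose⟩ ⟨i, a⟩ rfl (h.choose_spec.trans ha.symm)
      exact congrArg Subtype.val (eq_of_heq (Sigma.mk.inj this).2)
    · simp only [c, dif_neg h]
      exact ⟨fun h0 => absurd h0.symm a.2, fun ha => absurd ⟨a, ha⟩ h⟩
  have hsupp : ∀ r i, c r i ≠ 0 ↔ ∃ a : {α : A i // α ≠ 0}, (e ⟨i, a⟩).2 = r := by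
    refine fun r i => ⟨fun h => ⟨⟨_, h⟩, (hc r i ⟨_, h⟩).mp rfl⟩, ?_⟩
    rintro ⟨a, ha⟩
    exact (hc r i a).mpr ha ▸ a.2
  refine ⟨c, fun r => ?_, fun i α hα => ?_⟩
  · calc hammingNorm (c r) = #{i | c r i ≠ 0} := rfl
      _ = #(univ : Finset (Fin k)) := by
        refine (card_bij (fun j _ => (e.symm (j, r)).1) (fun j _ => ?_) ?_ ?_).symm
        · exact mem_filter.mpr ⟨mem_univ _, (hsupp r _).mpr ⟨(e.symm (j, r)).2, by simp⟩⟩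
        · intro j _ j' _ hjj'
          simpa using he _ _ hjj' (by simp)
        · intro i hi
          obtain ⟨a, ha⟩ := (hsupp r i).mp (mem_filter.mp hi).2
          refine ⟨(e ⟨i, a⟩).1, mem_univ _, ?_⟩
          rw [← ha, Prod.mk.eta, e.symm_apply_apply]
      _ = k := by simp
  · exact ⟨(e ⟨i, ⟨α, hα⟩⟩).2, (hc _ i ⟨α, hα⟩).mpr rfl,
      fun r hr => ((hc r i ⟨α, hα⟩).mp hr).symm⟩

end MixedSteiner

theorem exists_equiv_fin_prod_block_injective {m b k : ℕ} (d : Fin m → ℕ)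
    (hd : ∀ i, d i ≤ b) (hsum : ∑ i, d i = k * b) :
    ∃ e : (Σ i, Fin (d i)) ≃ Fin k × Fin b,
      ∀ p p', p.1 = p'.1 → (e p).2 = (e p').2 → p = p' := by
  refine ⟨finSigmaFinEquiv.trans ((finCongr hsum).trans finProdFinEquiv.symm), ?_⟩
  rintro ⟨i, a⟩ ⟨i', a'⟩ (rfl : i = i') h
  replace h := congrArg Fin.val h
  simp only [Equiv.trans_apply, finProdFinEquiv_symm_apply, Fin.coe_modNat, finCongr_apply,
    Fin.val_cast, finSigmaFinEquiv_apply] at h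
  have : (a : ℕ) = a' :=
    (Nat.ModEq.add_left_cancel' _ h).eq_of_lt_of_lt (a.2.trans_le (hd i)) (a'.2.trans_le (hd i))
  rw [Fin.ext this]

theorem exists_isMixedSteinerSystem {m b k : ℕ} {A : Fin m → Type*} [∀ i, Fintype (A i)]
    [∀ i, Zero (A i)] [∀ i, DecidableEq (A i)] (hk : 1 ≤ k)
    (hb : ∀ i, Fintype.card (A i) - 1 ≤ b) (hsum : ∑ i, (Fintype.card (A i) - 1) = k * b) :
    ∃ C : Finset (∀ i, A i), IsMixedSteinerSystem k C := by
  classical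
  have hcard : ∀ i, Fintype.card {α : A i // α ≠ 0} = Fintype.card (A i) - 1 := fun i => by
    rw [Fintype.card_subtype_compl, Fintype.card_subtype_eq]
  let σ := Equiv.sigmaCongrRight fun i => Fintype.equivFinOfCardEq (hcard i)
  obtain ⟨e, he⟩ := exists_equiv_fin_prod_block_injective _ hb hsum
  obtain ⟨c, hnorm, hcover⟩ := exists_exactCover_of_equiv (σ.trans e)
    fun p p' h₁ h₂ => σ.injective (he _ _ h₁ h₂)
  exact exists_isMixedSteinerSystem_of_exactCover hk c hnorm hcover

theorem stmt7_general (n k : ℕ) (hk : 1 ≤ k) (q : Fin (n + 1) → ℕ) (hq : ∀ i, 2 ≤ q i)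
    (hmono : Monotone q)
    (h₁ : (q (Fin.last n) - 1) * (k - 1) ≤ ∑ i : Fin n, (q i.castSucc - 1))
    (h₂ : k ∣ (∑ i : Fin n, (q i.castSucc - 1)) - (q (Fin.last n) - 1) * (k - 1)) :
    ∃ C : Finset (∀ i, ZMod (q i)),
      (∀ c ∈ C, hammingNorm c = k) ∧
      ∀ x : ∀ i, ZMod (q i), hammingNorm x = 1 →
        ∃! c, c ∈ C ∧ hammingDist x c = k - 1 := by
  have : ∀ i, NeZero (q i) := fun i => ⟨by have := hq i; omega⟩
  obtain ⟨m, hm⟩ := h₂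
  have hS := (Nat.sub_eq_iff_eq_add h₁).mp hm
  refine exists_isMixedSteinerSystem (b := m + (q (Fin.last n) - 1)) hk (fun i => ?_) ?_
  · have := hmono (Fin.le_last i)
    rw [ZMod.card]
    omega
  · obtain ⟨k, rfl⟩ := Nat.exists_eq_add_of_le' hk
    simp only [ZMod.card, Fin.sum_univ_castSucc, hS, Nat.add_sub_cancel]
    ring

/-- Let `Q = Z_{q₁} × ⋯ × Z_{q_{n+1}}` with `q₁ ≤ ⋯ ≤ q_{n+1}`, not all equal. If
`Σ_{i<n} (qᵢ - 1) - (q_{n+1} - 1)(k - 1)` is nonnegative and divisible by `k`, then there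
exists a mixed Steiner system `MS(1, k, Q)`: a set of weight-`k` words over `Q` such that
every weight-1 word is within Hamming distance `k - 1` of exactly one codeword. -/
theorem stmt7 (n k : ℕ) (hk : 1 ≤ k) (q : Fin (n + 1) → ℕ) (hq : ∀ i, 2 ≤ q i)
    (hmono : Monotone q) (hne : ∃ i j, q i ≠ q j)
    (h₁ : (q (Fin.last n) - 1) * (k - 1) ≤ ∑ i : Fin n, (q i.castSucc - 1))
    (h₂ : k ∣ (∑ i : Fin n, (q i.castSucc - 1)) - (q (Fin.last n) - 1) * (k - 1)) :
    ∃ C : Finset (∀ i, ZMod (q i)),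
      (∀ c ∈ C, hammingNorm c = k) ∧
      ∀ x : ∀ i, ZMod (q i), hammingNorm x = 1 →
        ∃! c, c ∈ C ∧ hammingDist x c = k - 1 :=
  stmt7_general n k hk q hq hmono h₁ h₂
end

section
/- Let A be an orthogonal array OA(2, k, k) over {1, …, k}. Define a code over Z_2^{(k−1)k} × Z_{k+1} whose codewords are: (i) for each 0 ≤ i ≤ k−2, the binary indicator of {ik+1, …, ik+k}; and (ii) for each row (j_1, …, j_k) of A, the word with ones in positions j_1, k+j_2, …, (k−2)k + j_{k−1} and symbol j_k in the final Z_{k+1}-coordinate. Then this code is a mixed Steiner system MS(2, k, Z_2^{(k−1)k} × Z_{k+1}): every weight-2 word is covered by exactly one codeword, and the minimum Hamming distance is at least 2(k−2)+1. -/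
/-!
Identify a binary position `p` with the cell `(p / k, p % k)` of a `(k - 1) × k` grid, i.e. with
the point "symbol `p % k` in column `p / k`" of the array, and a nonzero last coordinate `s` with
the point "symbol `s - 1` in column `k - 1`". A block word is then the set of points of one of the
first `k - 1` columns and a row word the set of points `(j, A r j)` of a row. All codewords have
weight `k`, and a codeword lies at distance `k - 2` from a word of weight 2 exactly when it covers
it, i.e. contains its two points. Two points in the same column lie in exactly one block and in no
row; two points in different columns lie in no block and, by orthogonality, in exactly one row.
Distinct rows share at most one point, so they differ in at least `k - 1` columns, which gives the
distance bound.
-/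

open Finset

namespace MixedSteiner

section MixedHamming

variable {ι R M : Type*}

theorem ite_eq_zero_le_add [Zero M] [DecidableEq M] (a b : M) :
    (if b = 0 then 0 else 1) ≤ (if a = 0 then 0 else 1) + (if a = b then 0 else 1) := by
  split_ifs <;> simp_all

theorem ite_eq_zero_eq_add_iff [Zero M] [DecidableEq M] (a b : M) :
    (if b = 0 then 0 else 1) = (if a = 0 then 0 else 1) + (if a = b then 0 else 1) ↔
      (a ≠ 0 → a = b) := by
  split_ifs <;> simp_all

theorem hammingNorm_add_hammingDist_eq_iff [Fintype ι] {β : ι → Type*}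
    [∀ i, DecidableEq (β i)] [∀ i, Zero (β i)] (x y : ∀ i, β i) :
    hammingNorm x + hammingDist x y = hammingNorm y ↔ ∀ i, x i ≠ 0 → x i = y i := by
  simp only [hammingNorm, hammingDist, card_filter, ← sum_add_distrib, ne_eq, ite_not]
  rw [eq_comm, sum_eq_sum_iff_of_le fun i _ => ite_eq_zero_le_add (x i) (y i)]
  simp only [mem_univ, true_implies, ite_eq_zero_eq_add_iff]

def mixedNorm [Fintype ι] [Zero R] [DecidableEq R] [Zero M] [DecidableEq M]
    (x : (ι → R) × M) : ℕ :=
  hammingNorm x.1 + if x.2 = 0 then 0 else 1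

def mixedDist [Fintype ι] [DecidableEq R] [DecidableEq M] (x y : (ι → R) × M) : ℕ :=
  hammingDist x.1 y.1 + if x.2 = y.2 then 0 else 1

def Covers [Zero R] [Zero M] (x c : (ι → R) × M) : Prop :=
  (∀ i, x.1 i ≠ 0 → x.1 i = c.1 i) ∧ (x.2 ≠ 0 → x.2 = c.2)

theorem mixedDist_comm [Fintype ι] [DecidableEq R] [DecidableEq M] (x y : (ι → R) × M) :
    mixedDist x y = mixedDist y x := by
  simp only [mixedDist, hammingDist_comm x.1, eq_comm (a := x.2)]

variable [Fintype ι] [Zero R] [DecidableEq R] [Zero M] [DecidableEq M]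

theorem mixedNorm_add_mixedDist_eq_iff (x c : (ι → R) × M) :
    mixedNorm x + mixedDist x c = mixedNorm c ↔ Covers x c := by
  have hbin := hammingNorm_add_hammingDist_eq_iff x.1 c.1
  have hsym := ite_eq_zero_eq_add_iff x.2 c.2
  have hle : hammingNorm c.1 ≤ hammingNorm x.1 + hammingDist x.1 c.1 :=
    calc hammingNorm c.1 = hammingDist c.1 0 := (hammingDist_zero_right _).symm
      _ ≤ hammingDist c.1 x.1 + hammingDist x.1 0 := hammingDist_triangle _ _ _
      _ = hammingNorm x.1 + hammingDist x.1 c.1 := by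
        rw [hammingDist_comm, hammingDist_zero_right, add_comm]
  have := ite_eq_zero_le_add x.2 c.2
  unfold mixedNorm mixedDist Covers
  rw [← hbin, ← hsym]
  omega

theorem mixedDist_eq_sub_iff_covers {x c : (ι → R) × M} (h : mixedNorm x ≤ mixedNorm c) :
    mixedDist x c = mixedNorm c - mixedNorm x ↔ Covers x c := by
  rw [← mixedNorm_add_mixedDist_eq_iff]
  omega

end MixedHamming

section Indicator

variable {ι M : Type*} [DecidableEq ι]

def binaryIndicator (S : Finset ι) : ι → ZMod 2 := fun i => if i ∈ S then 1 else 0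

theorem binaryIndicator_ne_zero_iff {S : Finset ι} {i : ι} :
    binaryIndicator S i ≠ 0 ↔ i ∈ S := by
  unfold binaryIndicator
  split_ifs with h <;> simp [h]

variable [Fintype ι]

theorem hammingNorm_binaryIndicator (S : Finset ι) : hammingNorm (binaryIndicator S) = #S := by
  simp only [hammingNorm, binaryIndicator_ne_zero_iff, filter_mem_eq_inter, univ_inter]

theorem hammingDist_binaryIndicator_add (S T : Finset ι) :
    hammingDist (binaryIndicator S) (binaryIndicator T) + 2 * #(S ∩ T) = #S + #T := by
  have hdiff : ({i | binaryIndicator S i ≠ binaryIndicator T i} : Finset ι) =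
      (S ∪ T) \ (S ∩ T) := by
    ext i
    simp only [mem_filter, mem_univ, true_and, mem_sdiff, mem_union, mem_inter]
    unfold binaryIndicator
    split_ifs <;> simp_all
  rw [hammingDist, hdiff, card_sdiff_of_subset inter_subset_union]
  have := card_union_add_card_inter S T
  have := card_le_card (inter_subset_union (s := S) (t := T))
  omega

theorem mixedNorm_binaryIndicator [Zero M] [DecidableEq M] (S : Finset ι) (s : M) :
    mixedNorm (binaryIndicator S, s) = #S + if s = 0 then 0 else 1 := by
  rw [mixedNorm, hammingNorm_binaryIndicator]

theorem mixedDist_binaryIndicator_add [DecidableEq M] (S T : Finset ι) (s t : M) :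
    mixedDist (binaryIndicator S, s) (binaryIndicator T, t) + 2 * #(S ∩ T) =
      #S + #T + if s = t then 0 else 1 := by
  have := hammingDist_binaryIndicator_add S T
  unfold mixedDist
  dsimp only
  omega

theorem covers_binaryIndicator_iff [Zero M] (x : (ι → ZMod 2) × M) (S : Finset ι) (s : M) :
    Covers x (binaryIndicator S, s) ↔
      ({i | x.1 i ≠ 0} : Finset ι) ⊆ S ∧ (x.2 ≠ 0 → x.2 = s) := by
  have h1 : ∀ a b : ZMod 2, a ≠ 0 → (a = b ↔ b ≠ 0) := by decide
  simp only [Covers, subset_iff, mem_filter, mem_univ, true_and]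
  refine and_congr_left' (forall_congr' fun i => imp_congr_right fun hi => ?_)
  exact (h1 _ _ hi).trans binaryIndicator_ne_zero_iff

end Indicator

section Transversal

variable {α β : Type*} [Fintype α] [Fintype β]

def block [DecidableEq α] (a : α) : Finset (α × β) := {x | x.1 = a}

def graph [DecidableEq β] (f : α → β) : Finset (α × β) := {x | f x.1 = x.2}

theorem mem_block [DecidableEq α] {a : α} {x : α × β} : x ∈ block a ↔ x.1 = a := by
  simp [block]

theorem mem_graph [DecidableEq β] {f : α → β} {x : α × β} : x ∈ graph f ↔ f x.1 = x.2 := by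
  simp [graph]

theorem card_block [DecidableEq α] (a : α) : #(block a : Finset (α × β)) = Fintype.card β :=
  card_nbij' Prod.snd (a, ·) (fun _ _ => mem_coe.2 (mem_univ _))
    (fun _ _ => mem_coe.2 (mem_block.2 rfl))
    (fun _ hx => Prod.ext (mem_block.1 hx).symm rfl) (fun _ _ => rfl)

theorem card_graph [DecidableEq β] (f : α → β) : #(graph f) = Fintype.card α :=
  card_nbij' Prod.fst (fun a => (a, f a)) (fun _ _ => mem_coe.2 (mem_univ _))
    (fun _ _ => mem_coe.2 (mem_graph.2 rfl))
    (fun _ hx => Prod.ext rfl (mem_graph.1 hx)) (fun _ _ => rfl)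

variable [DecidableEq α] [DecidableEq β]

theorem block_inter_block {a a' : α} (h : a ≠ a') :
    (block a ∩ block a' : Finset (α × β)) = ∅ := by
  ext x
  simp only [mem_inter, mem_block, notMem_empty, iff_false]
  grind

theorem block_inter_graph (a : α) (f : α → β) : block a ∩ graph f = {(a, f a)} := by
  ext x
  simp only [mem_inter, mem_block, mem_graph, mem_singleton, Prod.ext_iff]
  grind

theorem card_graph_inter_graph (f g : α → β) : #(graph f ∩ graph g) = #{a | f a = g a} := by
  refine card_nbij' Prod.fst (fun a => (a, f a)) (fun x hx => ?_) (fun a ha => ?_)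
    (fun x hx => ?_) (fun _ _ => rfl) <;>
    simp only [coe_inter, coe_filter, Set.mem_inter_iff, mem_coe, mem_graph, mem_univ,
      true_and] at *
  exacts [hx.1.trans hx.2.symm, ha.symm, Prod.ext rfl hx.1]

end Transversal

section Symbols

variable {n : ℕ}

theorem natCast_add_one_ne_zero (a : Fin n) : ((a : ℕ) : ZMod (n + 1)) + 1 ≠ 0 := by
  rw [← Nat.cast_succ, Ne, ZMod.natCast_eq_zero_iff]
  exact Nat.not_dvd_of_pos_of_lt a.val.succ_pos (by omega)

theorem natCast_add_one_inj {a b : Fin n} :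
    ((a : ℕ) : ZMod (n + 1)) + 1 = (b : ℕ) + 1 ↔ a = b := by
  rw [add_left_inj, ZMod.natCast_eq_natCast_iff', Nat.mod_eq_of_lt (by omega),
    Nat.mod_eq_of_lt (by omega), Fin.val_inj]

theorem exists_natCast_add_one_eq {s : ZMod (n + 1)} (hs : s ≠ 0) :
    ∃ a : Fin n, ((a : ℕ) : ZMod (n + 1)) + 1 = s := by
  have hval : s.val ≠ 0 := by rwa [Ne, ZMod.val_eq_zero]
  refine ⟨⟨s.val - 1, by have := s.val_lt; omega⟩, ?_⟩
  rw [← Nat.cast_succ, Nat.succ_eq_add_one, Nat.sub_add_cancel (Nat.one_le_iff_ne_zero.2 hval),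
    ZMod.natCast_zmod_val]

end Symbols

section Positions

variable {m n : ℕ}

theorem mem_map_block_iff (i : Fin m) (p : Fin (m * n)) :
    p ∈ (block i).map finProdFinEquiv.toEmbedding ↔ (p : ℕ) / n = i := by
  rw [mem_map_equiv, mem_block, finProdFinEquiv_symm_apply, Fin.ext_iff, Fin.coe_divNat]

theorem mem_map_graph_iff (f : Fin m → Fin n) (p : Fin (m * n)) :
    p ∈ (graph f).map finProdFinEquiv.toEmbedding ↔ ∃ i : Fin m, (p : ℕ) = i * n + f i := by
  rw [mem_map_equiv, mem_graph, finProdFinEquiv_symm_apply]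
  constructor
  · intro h
    refine ⟨p.divNat, ?_⟩
    rw [h, Fin.coe_divNat, Fin.coe_modNat, Nat.div_add_mod']
  · rintro ⟨i, hi⟩
    have := (Nat.div_mod_unique (a := p) (d := i) (Fin.pos p.modNat)).2
      ⟨by rw [hi]; ring, (f i).isLt⟩
    have hdiv : p.divNat = i := Fin.ext (by rw [Fin.coe_divNat, this.1])
    rw [hdiv]
    exact Fin.ext (by rw [Fin.coe_modNat, this.2])

end Positions

section OrthogonalArray

variable {ρ ι σ : Type*}

/-- Orthogonal array of strength 2 and index 1, with rows indexed by `ρ`. -/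
def IsOrthogonalArray (A : ρ → ι → σ) : Prop :=
  ∀ j₁ j₂ : ι, j₁ ≠ j₂ → ∀ a b : σ, ∃! r, A r j₁ = a ∧ A r j₂ = b

theorem IsOrthogonalArray.eq_of_agree {A : ρ → ι → σ} (hA : IsOrthogonalArray A) {r r' : ρ}
    {j₁ j₂ : ι} (hj : j₁ ≠ j₂) (h₁ : A r j₁ = A r' j₁) (h₂ : A r j₂ = A r' j₂) : r = r' :=
  (hA j₁ j₂ hj _ _).unique ⟨h₁, h₂⟩ ⟨rfl, rfl⟩

theorem IsOrthogonalArray.card_agree_add_ite_le_one {κ : Type*} [Fintype κ] [DecidableEq σ]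
    {A : ρ → ι → σ} (hA : IsOrthogonalArray A) {r r' : ρ} (hr : r ≠ r') {c : κ → ι}
    (hc : Function.Injective c) {last : ι} (hlast : ∀ i, c i ≠ last) :
    #{i | A r (c i) = A r' (c i)} + (if A r last = A r' last then 1 else 0) ≤ 1 := by
  split_ifs with h
  · rw [add_le_iff_nonpos_left, Nat.le_zero, card_eq_zero, filter_eq_empty_iff]
    exact fun i _ hi => hr (hA.eq_of_agree (hlast i) hi h)
  · rw [add_zero, card_le_one]
    intro i hi i' hi'
    by_contra hii'
    simp only [mem_filter, mem_univ, true_and] at hi hi'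
    exact hr (hA.eq_of_agree (hc.ne hii') hi hi')

end OrthogonalArray

section Code

variable {k : ℕ} {ρ : Type*}

def blockWord (k : ℕ) (i : Fin (k - 1)) : (Fin ((k - 1) * k) → ZMod 2) × ZMod (k + 1) :=
  (fun p : Fin ((k - 1) * k) => if (p : ℕ) / k = (i : ℕ) then 1 else 0, 0)

def rowWord (A : ρ → Fin k → Fin k) (last : Fin k) (r : ρ) :
    (Fin ((k - 1) * k) → ZMod 2) × ZMod (k + 1) :=
  (fun p : Fin ((k - 1) * k) => if ∃ i : Fin (k - 1),
      (p : ℕ) = (i : ℕ) * k + (A r (Fin.castLE (Nat.sub_le k 1) i) : ℕ) then 1 else 0,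
    ((A r last : ℕ) + 1 : ZMod (k + 1)))

def oaCode (A : ρ → Fin k → Fin k) (last : Fin k) :
    Set ((Fin ((k - 1) * k) → ZMod 2) × ZMod (k + 1)) :=
  {w | (∃ i, w = blockWord k i) ∨ ∃ r, w = rowWord A last r}

def blockSupport (i : Fin (k - 1)) : Finset (Fin ((k - 1) * k)) :=
  (block i).map finProdFinEquiv.toEmbedding

def rowSupport (A : ρ → Fin k → Fin k) (r : ρ) : Finset (Fin ((k - 1) * k)) :=
  (graph fun i : Fin (k - 1) => A r (Fin.castLE (Nat.sub_le k 1) i)).map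
    finProdFinEquiv.toEmbedding

theorem blockWord_eq (i : Fin (k - 1)) :
    blockWord k i = (binaryIndicator (blockSupport i), 0) := by
  ext p
  · simp only [blockWord, binaryIndicator, blockSupport, mem_map_block_iff]
  · rfl

theorem rowWord_eq (A : ρ → Fin k → Fin k) (last : Fin k) (r : ρ) :
    rowWord A last r =
      (binaryIndicator (rowSupport A r), ((A r last : ℕ) : ZMod (k + 1)) + 1) := by
  ext p
  · simp only [rowWord, binaryIndicator, rowSupport, mem_map_graph_iff]
  · rfl

theorem mem_blockSupport {i : Fin (k - 1)} {p : Fin ((k - 1) * k)} :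
    p ∈ blockSupport i ↔ (finProdFinEquiv.symm p).1 = i :=
  mem_map_equiv.trans mem_block

theorem mem_rowSupport {A : ρ → Fin k → Fin k} {r : ρ} {p : Fin ((k - 1) * k)} :
    p ∈ rowSupport A r ↔
      A r (Fin.castLE (Nat.sub_le k 1) (finProdFinEquiv.symm p).1) = (finProdFinEquiv.symm p).2 :=
  mem_map_equiv.trans mem_graph

theorem card_blockSupport (i : Fin (k - 1)) : #(blockSupport i) = k := by
  rw [blockSupport, card_map, card_block, Fintype.card_fin]

theorem card_rowSupport (A : ρ → Fin k → Fin k) (r : ρ) : #(rowSupport A r) = k - 1 := by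
  rw [rowSupport, card_map, card_graph, Fintype.card_fin]

theorem card_blockSupport_inter_blockSupport {i i' : Fin (k - 1)} (h : i ≠ i') :
    #(blockSupport i ∩ blockSupport i') = 0 := by
  rw [blockSupport, blockSupport, ← map_inter, block_inter_block h, map_empty, card_empty]

theorem card_blockSupport_inter_rowSupport (i : Fin (k - 1)) (A : ρ → Fin k → Fin k) (r : ρ) :
    #(blockSupport i ∩ rowSupport A r) = 1 := by
  rw [blockSupport, rowSupport, ← map_inter, block_inter_graph, card_map, card_singleton]

theorem card_rowSupport_inter_rowSupport (A : ρ → Fin k → Fin k) (r r' : ρ) :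
    #(rowSupport A r ∩ rowSupport A r') =
      #{i : Fin (k - 1) |
        A r (Fin.castLE (Nat.sub_le k 1) i) = A r' (Fin.castLE (Nat.sub_le k 1) i)} := by
  rw [rowSupport, rowSupport, ← map_inter, card_map, card_graph_inter_graph]

theorem mixedNorm_of_mem_oaCode {A : ρ → Fin k → Fin k} {last : Fin k}
    {c : (Fin ((k - 1) * k) → ZMod 2) × ZMod (k + 1)} (hc : c ∈ oaCode A last) :
    mixedNorm c = k := by
  rcases hc with ⟨i, rfl⟩ | ⟨r, rfl⟩
  · rw [blockWord_eq, mixedNorm_binaryIndicator, card_blockSupport, if_pos rfl, add_zero]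
  · rw [rowWord_eq, mixedNorm_binaryIndicator, card_rowSupport,
      if_neg (natCast_add_one_ne_zero _), Nat.sub_add_cancel last.pos]

theorem mixedDist_blockWord_blockWord {i i' : Fin (k - 1)} (h : i ≠ i') :
    mixedDist (blockWord k i) (blockWord k i') = 2 * k := by
  have := mixedDist_binaryIndicator_add (blockSupport i) (blockSupport i') (0 : ZMod (k + 1)) 0
  rw [card_blockSupport_inter_blockSupport h, card_blockSupport, card_blockSupport,
    if_pos rfl, ← blockWord_eq, ← blockWord_eq] at this
  omega

theorem mixedDist_blockWord_rowWord (i : Fin (k - 1)) (A : ρ → Fin k → Fin k) (last : Fin k)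
    (r : ρ) : mixedDist (blockWord k i) (rowWord A last r) = 2 * k - 2 := by
  have := mixedDist_binaryIndicator_add (blockSupport i) (rowSupport A r) 0
    (((A r last : ℕ) : ZMod (k + 1)) + 1)
  rw [card_blockSupport_inter_rowSupport, card_blockSupport, card_rowSupport,
    if_neg (natCast_add_one_ne_zero _).symm, ← blockWord_eq, ← rowWord_eq] at this
  omega

theorem le_mixedDist_rowWord_rowWord (hk : 2 ≤ k) {A : ρ → Fin k → Fin k}
    (hA : IsOrthogonalArray A) {last : Fin k} (hlast : (last : ℕ) = k - 1) {r r' : ρ}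
    (hr : r ≠ r') :
    2 * (k - 2) + 1 ≤ mixedDist (rowWord A last r) (rowWord A last r') := by
  have := mixedDist_binaryIndicator_add (rowSupport A r) (rowSupport A r')
    (((A r last : ℕ) : ZMod (k + 1)) + 1) (((A r' last : ℕ) : ZMod (k + 1)) + 1)
  rw [card_rowSupport_inter_rowSupport, card_rowSupport, card_rowSupport,
    ← rowWord_eq, ← rowWord_eq] at this
  simp only [natCast_add_one_inj] at this
  have hagree := hA.card_agree_add_ite_le_one hr (Fin.castLE_injective (Nat.sub_le k 1))
    (last := last) fun i h => i.isLt.ne ((congrArg Fin.val h).trans hlast)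
  split_ifs at this hagree <;> omega

theorem le_mixedDist_of_mem_oaCode (hk : 2 ≤ k) {A : ρ → Fin k → Fin k}
    (hA : IsOrthogonalArray A) {last : Fin k} (hlast : (last : ℕ) = k - 1)
    {c₁ c₂ : (Fin ((k - 1) * k) → ZMod 2) × ZMod (k + 1)} (h₁ : c₁ ∈ oaCode A last)
    (h₂ : c₂ ∈ oaCode A last) (hne : c₁ ≠ c₂) :
    2 * (k - 2) + 1 ≤ mixedDist c₁ c₂ := by
  rcases h₁ with ⟨i, rfl⟩ | ⟨r, rfl⟩ <;> rcases h₂ with ⟨i', rfl⟩ | ⟨r', rfl⟩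
  · rw [mixedDist_blockWord_blockWord (ne_of_apply_ne _ hne)]
    omega
  · rw [mixedDist_blockWord_rowWord]
    omega
  · rw [mixedDist_comm, mixedDist_blockWord_rowWord]
    omega
  · exact le_mixedDist_rowWord_rowWord hk hA hlast (ne_of_apply_ne _ hne)

section Covering

variable {A : ρ → Fin k → Fin k} {last : Fin k}
  {P : (Fin ((k - 1) * k) → ZMod 2) × ZMod (k + 1) → Prop}

theorem existsUnique_mem_oaCode_of_block (hB : ∃! i, P (blockWord k i))
    (hR : ∀ r, ¬P (rowWord A last r)) : ∃! c, c ∈ oaCode A last ∧ P c := by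
  obtain ⟨i, hi, huniq⟩ := hB
  refine ⟨blockWord k i, ⟨Or.inl ⟨i, rfl⟩, hi⟩, ?_⟩
  rintro c ⟨⟨i', rfl⟩ | ⟨r, rfl⟩, hc⟩
  · rw [huniq i' hc]
  · exact absurd hc (hR r)

theorem existsUnique_mem_oaCode_of_row (hB : ∀ i, ¬P (blockWord k i))
    (hR : ∃! r, P (rowWord A last r)) : ∃! c, c ∈ oaCode A last ∧ P c := by
  obtain ⟨r, hr, huniq⟩ := hR
  refine ⟨rowWord A last r, ⟨Or.inr ⟨r, rfl⟩, hr⟩, ?_⟩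
  rintro c ⟨⟨i, rfl⟩ | ⟨r', rfl⟩, hc⟩
  · exact absurd hc (hB i)
  · rw [huniq r' hc]

variable {x : (Fin ((k - 1) * k) → ZMod 2) × ZMod (k + 1)}

theorem existsUnique_covers_of_pair (hA : IsOrthogonalArray A) (hx : x.2 = 0)
    {p q : Fin ((k - 1) * k)} (hpq : p ≠ q) (hsupp : ({i | x.1 i ≠ 0} : Finset _) = {p, q}) :
    ∃! c, c ∈ oaCode A last ∧ Covers x c := by
  have hcov : ∀ S s, Covers x (binaryIndicator S, s) ↔ p ∈ S ∧ q ∈ S := by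
    intro S s
    simp [covers_binaryIndicator_iff, hsupp, insert_subset_iff, hx]
  set a := finProdFinEquiv.symm p
  set b := finProdFinEquiv.symm q
  have hab : a ≠ b := finProdFinEquiv.symm.injective.ne hpq
  by_cases h : a.1 = b.1
  · refine existsUnique_mem_oaCode_of_block ⟨a.1, ?_, fun i hi => ?_⟩ fun r hr => ?_
    · simp only [blockWord_eq, hcov, mem_blockSupport]
      exact ⟨rfl, h.symm⟩
    · simp only [blockWord_eq, hcov, mem_blockSupport] at hi
      exact hi.1.symm
    · simp only [rowWord_eq, hcov, mem_rowSupport] at hr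
      exact hab (Prod.ext h (hr.1.symm.trans (h ▸ hr.2)))
  · refine existsUnique_mem_oaCode_of_row (fun i hi => ?_) ?_
    · simp only [blockWord_eq, hcov, mem_blockSupport] at hi
      exact h (hi.1.trans hi.2.symm)
    · simp only [rowWord_eq, hcov, mem_rowSupport]
      exact hA _ _ ((Fin.castLE_injective _).ne h) a.2 b.2

theorem existsUnique_covers_of_single (hA : IsOrthogonalArray A) (hlast : (last : ℕ) = k - 1)
    (hx : x.2 ≠ 0) {p : Fin ((k - 1) * k)} (hsupp : ({i | x.1 i ≠ 0} : Finset _) = {p}) :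
    ∃! c, c ∈ oaCode A last ∧ Covers x c := by
  have hcov : ∀ S s, Covers x (binaryIndicator S, s) ↔ p ∈ S ∧ x.2 = s := by
    intro S s
    simp [covers_binaryIndicator_iff, hsupp, hx]
  obtain ⟨s, hs⟩ := exists_natCast_add_one_eq hx
  set a := finProdFinEquiv.symm p
  have hcol : Fin.castLE (Nat.sub_le k 1) a.1 ≠ last := fun h =>
    a.1.isLt.ne ((congrArg Fin.val h).trans hlast)
  refine existsUnique_mem_oaCode_of_row (fun i hi => hx ((hcov _ _).1 (blockWord_eq i ▸ hi)).2) ?_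
  simp only [rowWord_eq, hcov, mem_rowSupport, ← hs, natCast_add_one_inj, eq_comm (a := s)]
  exact hA _ _ hcol a.2 s

theorem existsUnique_covers (hA : IsOrthogonalArray A) (hlast : (last : ℕ) = k - 1)
    (hx : mixedNorm x = 2) : ∃! c, c ∈ oaCode A last ∧ Covers x c := by
  by_cases hx2 : x.2 = 0
  · have : hammingNorm x.1 = 2 := by simpa [mixedNorm, hx2] using hx
    obtain ⟨p, q, hpq, hsupp⟩ := card_eq_two.1 this
    exact existsUnique_covers_of_pair hA hx2 hpq hsupp
  · have : hammingNorm x.1 = 1 := by simpa [mixedNorm, hx2] using hx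
    obtain ⟨p, hsupp⟩ := card_eq_one.1 this
    exact existsUnique_covers_of_single hA hlast hx2 hsupp

end Covering

end Code

end MixedSteiner

open MixedSteiner in
/-- Let `A` be an `OA(2, k, k)` (symbols taken as `Fin k`, i.e. `0, …, k-1`, in place of
`1, …, k`). The code over `Z₂^{(k-1)k} × Z_{k+1}` whose codewords are: (i) for each
`i ≤ k - 2` the indicator of the positions `{ik, …, ik + k - 1}` (0-based), and (ii) for
each row `(j₀, …, j_{k-1})` of `A` the word with ones in positions `j₀, k + j₁, …,
(k-2)k + j_{k-2}` and nonzero symbol `j_{k-1} + 1` in the final `Z_{k+1}`-coordinate,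
is a mixed Steiner system `MS(2, k, Z₂^{(k-1)k} × Z_{k+1})`: all codewords have weight
`k`, every weight-2 word is covered by exactly one codeword, and the minimum Hamming
distance is at least `2(k-2)+1`. -/
theorem stmt8 (k : ℕ) (hk : 2 ≤ k) (A : Fin (k ^ 2) → Fin k → Fin k)
    (hA : ∀ j₁ j₂ : Fin k, j₁ ≠ j₂ → ∀ a b : Fin k, ∃! r, A r j₁ = a ∧ A r j₂ = b) :
    ∀ C : Set ((Fin ((k - 1) * k) → ZMod 2) × ZMod (k + 1)),
      C = { w | (∃ i : Fin (k - 1),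
              w = (fun p : Fin ((k - 1) * k) => if (p : ℕ) / k = (i : ℕ) then 1 else 0, 0)) ∨
            (∃ r : Fin (k ^ 2),
              w = (fun p : Fin ((k - 1) * k) => if ∃ i : Fin (k - 1),
                      (p : ℕ) = (i : ℕ) * k + (A r (Fin.castLE (Nat.sub_le k 1) i) : ℕ)
                    then 1 else 0,
                  ((A r ⟨k - 1, by omega⟩ : ℕ) + 1 : ZMod (k + 1)))) } →
      (∀ c ∈ C, hammingNorm c.1 + (if c.2 = 0 then 0 else 1) = k) ∧
      (∀ x : (Fin ((k - 1) * k) → ZMod 2) × ZMod (k + 1),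
        hammingNorm x.1 + (if x.2 = 0 then 0 else 1) = 2 →
        ∃! c, c ∈ C ∧ hammingDist x.1 c.1 + (if x.2 = c.2 then 0 else 1) = k - 2) ∧
      (∀ c₁ ∈ C, ∀ c₂ ∈ C, c₁ ≠ c₂ →
        2 * (k - 2) + 1 ≤ hammingDist c₁.1 c₂.1 + (if c₁.2 = c₂.2 then 0 else 1)) := by
  rintro C rfl
  have hlast : ((⟨k - 1, by omega⟩ : Fin k) : ℕ) = k - 1 := rfl
  refine ⟨fun c hc => mixedNorm_of_mem_oaCode hc, fun x hx => ?_,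
    fun c₁ h₁ c₂ h₂ hne => le_mixedDist_of_mem_oaCode hk hA hlast h₁ h₂ hne⟩
  refine (existsUnique_congr fun c => and_congr_right fun hc => ?_).2
    (existsUnique_covers hA hlast hx)
  have hxn : mixedNorm x = 2 := hx
  have hcn : mixedNorm c = k := mixedNorm_of_mem_oaCode hc
  have hcov := mixedDist_eq_sub_iff_covers (x := x) (c := c) (by omega)
  rwa [hcn, hxn] at hcov
end

section
/- If there exists a mixed Steiner system MS(t, t+1, Z_{g+1}^n × Z_{m+1}) (equivalently a GDD(t, t+1, ng+m) of type g^n m^1 with minimum Hamming distance 3 as a code), then n ≥ max{m + t − 1, g + t − 1}. -/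
/-!
View `Z_{g+1}ⁿ × Z_{m+1}` as words over `n + 1` coordinates and fix any coordinate `k`, with
alphabet of size `q`. Take a word `y` of weight `t - 1` vanishing at `k`. For each of the `q - 1`
nonzero symbols `v`, the word `y[k ↦ v]` has weight `t`, so its covering codeword (of weight
`t + 1`) is `y[k ↦ v]` with one more symbol placed at a coordinate `p ∉ supp y ∪ {k}`. Two
symbols `v ≠ v'` cannot give the same `p`: their codewords would agree off `{k, p}`, at distance
at most 2. Hence `q - 1 ≤ (n + 1) - t`; taking `k` to be the `Z_{m+1}` coordinate and then a
`Z_{g+1}` coordinate gives both bounds.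
-/

open Finset Function

section Hamming

variable {ι : Type*} {β : ι → Type*}

theorem exists_forall_ne_zero_iff_mem [∀ i, Zero (β i)] [∀ i, Nontrivial (β i)] (s : Finset ι) :
    ∃ y : ∀ i, β i, ∀ i, y i ≠ 0 ↔ i ∈ s := by
  classical
  choose a ha using fun i => exists_ne (0 : β i)
  exact ⟨fun i => if i ∈ s then a i else 0, fun i => by by_cases hi : i ∈ s <;> simp [hi, ha]⟩

variable [Fintype ι] [∀ i, DecidableEq (β i)]

theorem exists_ne_iff_eq_of_hammingDist_eq_one {x y : ∀ i, β i} (h : hammingDist x y = 1) :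
    ∃ p, ∀ j, x j ≠ y j ↔ j = p := by
  obtain ⟨p, hp⟩ := card_eq_one.mp h
  exact ⟨p, fun j => by simpa using Finset.ext_iff.mp hp j⟩

theorem hammingDist_le_card_of_eqOn_compl {x y : ∀ i, β i} (s : Finset ι)
    (h : ∀ j ∉ s, x j = y j) : hammingDist x y ≤ #s :=
  card_le_card fun j hj => by_contra fun hjs => (mem_filter.mp hj).2 (h j hjs)

variable [∀ i, Zero (β i)]

theorem hammingNorm_eq_card {y : ∀ i, β i} {s : Finset ι} (hy : ∀ i, y i ≠ 0 ↔ i ∈ s) :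
    hammingNorm y = #s :=
  congrArg card (by ext i; simp [hy])

theorem exists_eq_zero_of_hammingDist_eq_one {x c : ∀ i, β i} (hd : hammingDist x c = 1)
    (hw : hammingNorm x < hammingNorm c) : ∃ p, x p = 0 ∧ ∀ j ≠ p, c j = x j := by
  obtain ⟨p, hp⟩ := exists_ne_iff_eq_of_hammingDist_eq_one hd
  have agree : ∀ j ≠ p, c j = x j := fun j hj => (not_not.mp (mt (hp j).mp hj)).symm
  refine ⟨p, by_contra fun hxp => hw.not_ge (card_le_card fun j hj => ?_), agree⟩
  simp only [mem_filter, mem_univ, true_and] at hj ⊢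
  by_cases hjp : j = p
  · exact hjp ▸ hxp
  · exact agree j hjp ▸ hj

/-- Uniqueness of the covering codeword is automatic from the minimum distance 3, so this is the
mixed Steiner system `MS(t, t+1, ∏ i, β i)` when `β i = Z_{qᵢ}`. -/
structure IsSteinerCode (t : ℕ) (C : Set (∀ i, β i)) : Prop where
  hammingNorm_eq : ∀ c ∈ C, hammingNorm c = t + 1
  exists_hammingDist_eq_one : ∀ x, hammingNorm x = t → ∃ c ∈ C, hammingDist x c = 1
  three_le_hammingDist : ∀ c₁ ∈ C, ∀ c₂ ∈ C, c₁ ≠ c₂ → 3 ≤ hammingDist c₁ c₂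

theorem IsSteinerCode.card_add_le [DecidableEq ι] [∀ i, Nontrivial (β i)] {t : ℕ}
    {C : Set (∀ i, β i)} (hC : IsSteinerCode t C) (ht : 1 ≤ t) (htι : t ≤ Fintype.card ι)
    (k : ι) [Fintype (β k)] : Fintype.card (β k) + t ≤ Fintype.card ι + 1 := by
  obtain ⟨s, hsk, hs⟩ := exists_subset_card_eq (s := univ.erase k) (n := t - 1)
    (by rw [card_erase_of_mem (mem_univ k), card_univ]; omega)
  have hks : k ∉ s := fun h => by simpa using hsk h
  obtain ⟨y, hy⟩ := exists_forall_ne_zero_iff_mem (β := β) s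
  let Covers (v : β k) (p : ι) : Prop := ∃ c ∈ C, c k = v ∧ ∀ j, j ≠ k → j ≠ p → c j = y j
  have exists_covers : ∀ v ∈ univ.filter (· ≠ 0), ∃ p ∈ sᶜ.erase k, Covers v p := by
    intro v hv
    replace hv : v ≠ 0 := (mem_filter.mp hv).2
    have hx : hammingNorm (update y k v) = t := by
      rw [hammingNorm_eq_card (s := insert k s), card_insert_of_notMem hks]
      · omega
      intro i
      by_cases hi : i = k
      · subst hi; simp [hv]
      · simp [hi, hy]
    obtain ⟨c, hcC, hxc⟩ := hC.exists_hammingDist_eq_one _ hx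
    obtain ⟨p, hxp, hcx⟩ := exists_eq_zero_of_hammingDist_eq_one hxc
      (by rw [hx, hC.hammingNorm_eq c hcC]; omega)
    have hpk : p ≠ k := by rintro rfl; simp [hv] at hxp
    refine ⟨p, ?_, c, hcC, ?_, fun j hjk hjp => ?_⟩
    · rw [update_of_ne hpk] at hxp
      exact mem_erase.mpr ⟨hpk, mem_compl.mpr fun hps => (hy p).mpr hps hxp⟩
    · rw [hcx k hpk.symm]; simp
    · rw [hcx j hjp]; simp [hjk]
  have covers_unique : ∀ p ∈ sᶜ.erase k,
      ({v ∈ univ.filter (· ≠ 0) | Covers v p} : Set (β k)).Subsingleton := by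
    rintro p - v₁ ⟨-, c₁, hc₁, rfl, hc₁y⟩ v₂ ⟨-, c₂, hc₂, rfl, hc₂y⟩
    by_contra hne
    have hfar := hC.three_le_hammingDist c₁ hc₁ c₂ hc₂ fun h => hne (h ▸ rfl)
    have hnear : hammingDist c₁ c₂ ≤ #{k, p} := hammingDist_le_card_of_eqOn_compl _ fun j hj => by
      simp only [mem_insert, mem_singleton, not_or] at hj
      rw [hc₁y j hj.1 hj.2, hc₂y j hj.1 hj.2]
    have := card_le_two (a := k) (b := p)
    omega
  have hcard := card_le_card_of_forall_subsingleton Covers exists_covers covers_unique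
  rw [filter_ne', card_erase_of_mem (mem_univ _), card_univ,
    card_erase_of_mem (by simpa), card_compl, hs] at hcard
  have := Fintype.one_lt_card (α := β k)
  omega

end Hamming

section OptionIndex

variable {ι : Type*} [Fintype ι] {β : Option ι → Type*} [∀ o, DecidableEq (β o)]

theorem hammingDist_option (x y : ∀ o, β o) :
    hammingDist x y = hammingDist (fun i => x (some i)) (fun i => y (some i)) +
      if x none = y none then 0 else 1 := by
  simp only [hammingDist, card_filter, Fintype.sum_option, ite_not]
  ring

theorem hammingNorm_option [∀ o, Zero (β o)] (x : ∀ o, β o) :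
    hammingNorm x = hammingNorm (fun i => x (some i)) + if x none = 0 then 0 else 1 := by
  simp only [hammingNorm, card_filter, Fintype.sum_option, ite_not]
  ring

end OptionIndex

/-- `Z_{g+1}ⁿ × Z_{m+1}` with its `n + 1` coordinates indexed by `Option (Fin n)`, `none` being the
`Z_{m+1}` coordinate. -/
abbrev MixedWord (n g m : ℕ) : Type :=
  ∀ o : Option (Fin n), ZMod (o.elim m (fun _ => g) + 1)

def MixedWord.equivProd (n g m : ℕ) : MixedWord n g m ≃ (Fin n → ZMod (g + 1)) × ZMod (m + 1) :=
  Equiv.piOptionEquivProd.trans (Equiv.prodComm _ _)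

theorem MixedWord.isSteinerCode_preimage_equivProd {n g m t : ℕ}
    {C : Set ((Fin n → ZMod (g + 1)) × ZMod (m + 1))}
    (hweight : ∀ c ∈ C, hammingNorm c.1 + (if c.2 = 0 then 0 else 1) = t + 1)
    (hcover : ∀ x : (Fin n → ZMod (g + 1)) × ZMod (m + 1),
      hammingNorm x.1 + (if x.2 = 0 then 0 else 1) = t →
      ∃ c ∈ C, hammingDist x.1 c.1 + (if x.2 = c.2 then 0 else 1) = 1)
    (hdist : ∀ c₁ ∈ C, ∀ c₂ ∈ C, c₁ ≠ c₂ →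
      3 ≤ hammingDist c₁.1 c₂.1 + (if c₁.2 = c₂.2 then 0 else 1)) :
    IsSteinerCode t (equivProd n g m ⁻¹' C) where
  hammingNorm_eq c hc := by rw [hammingNorm_option]; exact hweight _ hc
  exists_hammingDist_eq_one x hx := by
    obtain ⟨c, hc, hxc⟩ := hcover (equivProd n g m x) (by rwa [hammingNorm_option] at hx)
    exact ⟨(equivProd n g m).symm c, by simpa using hc, by rw [hammingDist_option]; exact hxc⟩
  three_le_hammingDist c₁ hc₁ c₂ hc₂ hne := by
    rw [hammingDist_option]
    exact hdist _ hc₁ _ hc₂ ((equivProd n g m).injective.ne hne)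

/-- If there exists a mixed Steiner system `MS(t, t+1, Z_{g+1}ⁿ × Z_{m+1})` — a code of
weight-`(t+1)` words over `Z_{g+1}ⁿ × Z_{m+1}` in which every weight-`t` word is within
Hamming distance 1 of exactly one codeword and whose minimum Hamming distance is 3
(equivalently a `GDD(t, t+1, ng+m)` of type `gⁿ m¹` with minimum distance 3) —
then `n ≥ max {m + t - 1, g + t - 1}`.  (`t - 1 ≤ n` is the implicit nondegeneracy
condition that transverse `t`-subsets of the point set exist.) -/
theorem stmt10 (n t g m : ℕ) (ht : 1 ≤ t) (hg : 1 ≤ g) (hm : 1 ≤ m) (hn : t - 1 ≤ n)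
    (h : ∃ C : Set ((Fin n → ZMod (g + 1)) × ZMod (m + 1)),
      (∀ c ∈ C, hammingNorm c.1 + (if c.2 = 0 then 0 else 1) = t + 1) ∧
      (∀ x : (Fin n → ZMod (g + 1)) × ZMod (m + 1),
        hammingNorm x.1 + (if x.2 = 0 then 0 else 1) = t →
        ∃! c, c ∈ C ∧ hammingDist x.1 c.1 + (if x.2 = c.2 then 0 else 1) = 1) ∧
      (∀ c₁ ∈ C, ∀ c₂ ∈ C, c₁ ≠ c₂ →
        3 ≤ hammingDist c₁.1 c₂.1 + (if c₁.2 = c₂.2 then 0 else 1))) :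
    max (m + t - 1) (g + t - 1) ≤ n := by
  obtain ⟨C, hweight, hcover, hdist⟩ := h
  have hC := MixedWord.isSteinerCode_preimage_equivProd hweight
    (fun x hx => (hcover x hx).exists) hdist
  have (o : Option (Fin n)) : Fact (1 < o.elim m (fun _ => g) + 1) := ⟨by cases o <;> simpa⟩
  have htn : t ≤ Fintype.card (Option (Fin n)) := by
    rw [Fintype.card_option, Fintype.card_fin]; omega
  have hm_bound := hC.card_add_le ht htn none
  rw [ZMod.card, Option.elim_none, Fintype.card_option, Fintype.card_fin] at hm_bound
  have hg_bound := hC.card_add_le ht htn (some ⟨0, by omega⟩)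
  rw [ZMod.card, Option.elim_some, Fintype.card_option, Fintype.card_fin] at hg_bound
  omega
end
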